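/- (Well-defined evaluation) Assume Γ is a static context from a declaration list and μ′ is a store with dom(μ(Γ)) ⊆ dom(μ′). If Γ ⊢ e : t, then the evaluation eval_{Γ,μ′}(e_i) is well-defined (yields a value in 𝕍 ∪ {•}) for every multi-index i ≤ t. -/

import Mathlib

/-- Rounding up to the nearest multiple of `M`. -/
noncomputable def roundUp (M d : ℕ) : ℕ := sInf {m : ℕ | ∃ n : ℕ, m = n * M ∧ d ≤ m}

/-- Tensor types are tuples of naturals. -/
abbrev Ty := List ℕ
/-- Multi-indices. -/
abbrev Index := List ℕ

/-- `IdxLe i t`: the multi-index `i` (with components in {1,2,…}) is bounded by `t`. -/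
def IdxLe (i t : Index) : Prop :=
  i.length = t.length ∧ ∀ l, l < t.length → 1 ≤ i.getD l 0 ∧ i.getD l 0 ≤ t.getD l 0

/-- Swap the `m`-th and `n`-th components (1-based). -/
def swapIdx (t : List ℕ) (m n : ℕ) : List ℕ :=
  (t.set (m-1) (t.getD (n-1) 0)).set (n-1) (t.getD (m-1) 0)

/-- Delete the `m`-th and `n`-th components (1-based, `m < n`). -/
def delete2 (t : List ℕ) (m n : ℕ) : List ℕ :=
  (t.eraseIdx (n-1)).eraseIdx (m-1)

/-- Insert value `l` at the `m`-th and `n`-th positions (1-based, `m < n`). -/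
def insert2 (i : List ℕ) (m n l : ℕ) : List ℕ :=
  (i.insertIdx (m-1) l).insertIdx (n-1) l

/-- Pad a tensor type componentwise. -/
noncomputable def padT (M : ℕ) (t : Ty) : Ty := t.map (roundUp M)

/-- The padding region of a type: indices within the padded bounds but not the original ones. -/
def PadReg (M : ℕ) (t : Ty) (i : Index) : Prop := ¬ IdxLe i t ∧ IdxLe i (padT M t)

inductive Op | add | sub | mul | div
deriving DecidableEq

/-- Expressions of the tensor model language. -/
inductive Expr
| var : String → Expr
| paren : Expr → Expr
| binop : Op → Expr → Expr → Expr
| prod : Expr → Expr → Expr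
| trans : Expr → ℕ → ℕ → Expr
| contr : Expr → ℕ → ℕ → Expr

/-- A static context maps identifiers to tensor types. -/
abbrev Ctx := String → Option Ty

/-- Componentwise padding of a static context. -/
noncomputable def padCtx (M : ℕ) (Γ : Ctx) : Ctx := fun x => (Γ x).map (padT M)

/-- The typing rules of the tensor model language. -/
inductive HasTy (Γ : Ctx) : Expr → Ty → Prop
| var {x t} : Γ x = some t → HasTy Γ (.var x) t
| paren {e t} : HasTy Γ e t → HasTy Γ (.paren e) t
| prod {e₀ e₁ t₀ t₁} : HasTy Γ e₀ t₀ → HasTy Γ e₁ t₁ → HasTy Γ (.prod e₀ e₁) (t₀ ++ t₁)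
| trans {e t m n} : HasTy Γ e t → 1 ≤ m → m < n → n ≤ t.length →
    HasTy Γ (.trans e m n) (swapIdx t m n)
| contr {e t m n} : HasTy Γ e t → 1 ≤ m → m < n → n ≤ t.length →
    t.getD (m-1) 0 = t.getD (n-1) 0 → HasTy Γ (.contr e m n) (delete2 t m n)
| elem {op e₀ e₁ t} : HasTy Γ e₀ t → HasTy Γ e₁ t → HasTy Γ (.binop op e₀ e₁) t
| smul {e₀ e₁ t} : HasTy Γ e₀ [] → HasTy Γ e₁ t → HasTy Γ (.binop .mul e₀ e₁) t
| sdiv {e₀ e₁ t} : HasTy Γ e₀ t → HasTy Γ e₁ [] → HasTy Γ (.binop .div e₀ e₁) t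

/-- Syntax-directed type inference. -/
def inferTy (Γ : Ctx) : Expr → Option Ty
| .var x => Γ x
| .paren e => inferTy Γ e
| .prod e₀ e₁ => do pure ((← inferTy Γ e₀) ++ (← inferTy Γ e₁))
| .trans e m n => do
    let t ← inferTy Γ e
    if 1 ≤ m ∧ m < n ∧ n ≤ t.length then pure (swapIdx t m n) else none
| .contr e m n => do
    let t ← inferTy Γ e
    if 1 ≤ m ∧ m < n ∧ n ≤ t.length ∧ t.getD (m-1) 0 = t.getD (n-1) 0 then
      pure (delete2 t m n) else none
| .binop op e₀ e₁ => do
    let t₀ ← inferTy Γ e₀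
    let t₁ ← inferTy Γ e₁
    if t₀ = t₁ then pure t₀
    else if op = .mul ∧ t₀ = [] then pure t₁
    else if op = .div ∧ t₁ = [] then pure t₀
    else none

/-- The value domain `𝕍 ∪ {•}`: `none` is the undefined value `•`. -/
abbrev W (V : Type) := Option V

/-- Extended addition: `•` is absorbing. -/
def wadd {V : Type} [Add V] : W V → W V → W V
| some a, some b => some (a + b)
| _, _ => none

def wsub {V : Type} [Sub V] : W V → W V → W V
| some a, some b => some (a - b)
| _, _ => none

def wmul {V : Type} [Mul V] : W V → W V → W V
| some a, some b => some (a * b)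
| _, _ => none

/-- Controlled division on `𝕍 ∪ {•}`: `0/0 = 0`, `0/• = 0`, otherwise `•` absorbs
    and division by zero is undefined. -/
def wdiv {V : Type} [Field V] [DecidableEq V] : W V → W V → W V
| some a, some b => if b = 0 then (if a = 0 then some 0 else none) else some (a / b)
| some a, none => if a = 0 then some 0 else none
| none, _ => none

def applyOp {V : Type} [Field V] [DecidableEq V] : Op → W V → W V → W V
| .add => wadd
| .sub => wsub
| .mul => wmul
| .div => wdiv

/-- A dynamic store: a partial map from subscripted identifiers to `𝕍 ∪ {•}`. -/
abbrev Store (V : Type) := String × Index → Option (W V)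

/-- Denotational semantics of expression evaluation; `none` means evaluation is stuck
    (not well-defined), `some w` means the result is the value `w ∈ 𝕍 ∪ {•}`. -/
def eval {V : Type} [Field V] [DecidableEq V] (Γ : Ctx) (μ : Store V) :
    Expr → Index → Option (W V)
| .var x, i => μ (x, i)
| .paren e, i => eval Γ μ e i
| .prod e₀ e₁, i => do
    let t₀ ← inferTy Γ e₀
    let v₀ ← eval Γ μ e₀ (i.take t₀.length)
    let v₁ ← eval Γ μ e₁ (i.drop t₀.length)
    pure (wmul v₀ v₁)
| .trans e m n, i => eval Γ μ e (swapIdx i m n)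
| .contr e m n, i => do
    let t ← inferTy Γ e
    let vs ← (List.range (t.getD (m-1) 0)).mapM (fun l => eval Γ μ e (insert2 i m n (l+1)))
    pure (vs.foldl wadd (some 0))
| .binop op e₀ e₁, i => do
    let t₀ ← inferTy Γ e₀
    let t₁ ← inferTy Γ e₁
    if op = .mul ∧ t₀ = [] then
      let v₀ ← eval Γ μ e₀ []
      let v₁ ← eval Γ μ e₁ i
      pure (wmul v₀ v₁)
    else if op = .div ∧ t₁ = [] then
      let v₀ ← eval Γ μ e₀ i
      let v₁ ← eval Γ μ e₁ []
      pure (wdiv v₀ v₁)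
    else
      let v₀ ← eval Γ μ e₀ i
      let v₁ ← eval Γ μ e₁ i
      pure (applyOp op v₀ v₁)

open Classical

/-- The unique initial store determined by `Γ` and the ambient values `v`. -/
noncomputable def initStore {V : Type} (Γ : Ctx) (v : String → Index → W V) : Store V :=
  fun p => match Γ p.1 with
  | some t => if IdxLe p.2 t then some (v p.1 p.2) else none
  | none => none

/-- The unique padded initial store: values on the original domain, zero on padding. -/
noncomputable def initStoreP {V : Type} [Zero V] (M : ℕ) (Γ : Ctx)
    (v : String → Index → W V) : Store V :=
  fun p => match Γ p.1 with
  | some t =>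
      if IdxLe p.2 t then some (v p.1 p.2)
      else if IdxLe p.2 (padT M t) then some (some 0)
      else none
  | none => none

/-- A statement `x = e`. -/
abbrev Stmt := String × Expr

/-- Well-formedness of a statement list in context `Γ`. -/
def Ok (Γ : Ctx) (ss : List Stmt) : Prop :=
  ∀ s ∈ ss, ∃ t, Γ s.1 = some t ∧ HasTy Γ s.2 t

/-- Evaluation of a single assignment statement (rule ev-stmt). -/
inductive StepStmt {V : Type} [Field V] [DecidableEq V] (Γ : Ctx) :
    Store V → Stmt → Store V → Prop
| mk {μ : Store V} {x e t} :
    Γ x = some t →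
    (∀ i, IdxLe i t → μ (x, i) ≠ none) →
    (∀ i, IdxLe i t → (eval Γ μ e i).isSome) →
    StepStmt Γ μ (x, e)
      (fun p => if p.1 = x ∧ IdxLe p.2 t then eval Γ μ e p.2 else μ p)

/-- Evaluation of a statement sequence. -/
inductive StepStmts {V : Type} [Field V] [DecidableEq V] (Γ : Ctx) :
    Store V → List Stmt → Store V → Prop
| nil {μ} : StepStmts Γ μ [] μ
| cons {μ μ' μ'' s ss} : StepStmt Γ μ s μ' → StepStmts Γ μ' ss μ'' →
    StepStmts Γ μ (s :: ss) μ''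

/-- Evaluation of a single assignment statement with a padded store (rule ev-pad-stmt). -/
inductive StepStmtP {V : Type} [Field V] [DecidableEq V] (M : ℕ) (Γ : Ctx) :
    Store V → Stmt → Store V → Prop
| mk {μ : Store V} {x e t} :
    Γ x = some t →
    (∀ i, IdxLe i (padT M t) → μ (x, i) ≠ none) →
    (∀ i, IdxLe i (padT M t) → (eval (padCtx M Γ) μ e i).isSome) →
    StepStmtP M Γ μ (x, e)
      (fun p => if p.1 = x ∧ IdxLe p.2 (padT M t) then eval (padCtx M Γ) μ e p.2 else μ p)

inductive StepStmtsP {V : Type} [Field V] [DecidableEq V] (M : ℕ) (Γ : Ctx) :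
    Store V → List Stmt → Store V → Prop
| nil {μ} : StepStmtsP M Γ μ [] μ
| cons {μ μ' μ'' s ss} : StepStmtP M Γ μ s μ' → StepStmtsP M Γ μ' ss μ'' →
    StepStmtsP M Γ μ (s :: ss) μ''

/-! Induction on the typing derivation. The only real content is that the index
transformations of `eval` map an index in range for the result type to one in range for the
subexpression. Viewing `IdxLe i t` as `List.Forall₂` of the entrywise bounds, this is preserved by
`take`/`drop` and by setting or inserting related entries in both lists; and the type `t` of the
subexpression is recovered from the result type by swapping back (transposition) or by reinserting
the common extent of the two deleted dimensions (contraction). -/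

namespace List

variable {α β : Type*} {R : α → β → Prop}

theorem Forall₂.set {l₁ : List α} {l₂ : List β} (h : Forall₂ R l₁ l₂) {a : α} {b : β}
    (hab : R a b) (k : ℕ) : Forall₂ R (l₁.set k a) (l₂.set k b) := by
  induction h generalizing k with
  | nil => exact .nil
  | cons hr ht ih => cases k <;> simp [hr, hab, ht, ih]

theorem Forall₂.insertIdx {l₁ : List α} {l₂ : List β} (h : Forall₂ R l₁ l₂) {a : α} {b : β}
    (hab : R a b) (k : ℕ) : Forall₂ R (l₁.insertIdx k a) (l₂.insertIdx k b) := by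
  induction h generalizing k with
  | nil => cases k <;> simp [hab]
  | cons hr ht ih => cases k <;> simp [hr, hab, ht, ih]

theorem Forall₂.rel_getD {l₁ : List α} {l₂ : List β} (h : Forall₂ R l₁ l₂) {k : ℕ}
    (hk : k < l₂.length) (a : α) (b : β) : R (l₁.getD k a) (l₂.getD k b) := by
  rw [getD_eq_getElem _ _ (h.length_eq ▸ hk), getD_eq_getElem _ _ hk]
  exact h.get _ _

theorem isSome_mapM_of_forall {f : α → Option β} {l : List α} (h : ∀ a ∈ l, (f a).isSome) :
    (l.mapM f).isSome := by
  induction l with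
  | nil => rfl
  | cons a l ih =>
    obtain ⟨b, hb⟩ := Option.isSome_iff_exists.mp (h a mem_cons_self)
    obtain ⟨bs, hbs⟩ := Option.isSome_iff_exists.mp (ih fun a ha => h a (mem_cons_of_mem _ ha))
    simp [mapM_cons, hb, hbs]

end List

theorem Option.isSome_bind_bind_pure {α β γ : Type*} {x : Option α} {y : Option β} {f : α → β → γ}
    (hx : x.isSome) (hy : y.isSome) : (x.bind fun a => y.bind fun b => pure (f a b)).isSome := by
  obtain ⟨a, rfl⟩ := Option.isSome_iff_exists.mp hx
  obtain ⟨b, rfl⟩ := Option.isSome_iff_exists.mp hy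
  rfl

open List

theorem idxLe_iff_forall₂ {i t : Index} : IdxLe i t ↔ Forall₂ (fun a b => 1 ≤ a ∧ a ≤ b) i t := by
  rw [forall₂_iff_get, IdxLe]
  refine and_congr_right fun hlen => ⟨fun h l h₁ h₂ => ?_, fun h l hl => ?_⟩
  · simpa [getElem?_eq_getElem h₁, getElem?_eq_getElem h₂] using h l h₂
  · simpa [getElem?_eq_getElem hl, getElem?_eq_getElem (hlen ▸ hl)] using h l (hlen ▸ hl) hl

theorem swapIdx_swapIdx {t : List ℕ} {m n : ℕ} (hmn : m - 1 ≠ n - 1) (hm : m - 1 < t.length)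
    (hn : n - 1 < t.length) : swapIdx (swapIdx t m n) m n = t := by
  apply ext_getElem (by simp [_root_.swapIdx])
  intro k _ _
  simp [swapIdx, getElem_set, hm, hn]
  split_ifs <;> simp_all

theorem insert2_delete2 {t : List ℕ} {m n : ℕ} (hmn : m - 1 < n - 1) (hn : n - 1 < t.length)
    (heq : t.getD (m-1) 0 = t.getD (n-1) 0) : insert2 (delete2 t m n) m n (t.getD (m-1) 0) = t := by
  have hm : m - 1 < (t.eraseIdx (n-1)).length := by rw [length_eraseIdx_of_lt hn]; omega
  have hget : (t.eraseIdx (n-1))[m-1] = t.getD (m-1) 0 := by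
    rw [getElem_eraseIdx, dif_pos hmn, getD_eq_getElem]
  rw [insert2, delete2, ← hget, insertIdx_eraseIdx_getElem hm, hget, heq, getD_eq_getElem _ _ hn,
    insertIdx_eraseIdx_getElem hn]

theorem List.Forall₂.swapIdx {R : ℕ → ℕ → Prop} {l₁ l₂ : List ℕ} (h : Forall₂ R l₁ l₂)
    {m n : ℕ} (hm : m - 1 < l₂.length) (hn : n - 1 < l₂.length) :
    Forall₂ R (swapIdx l₁ m n) (swapIdx l₂ m n) :=
  (h.set (h.rel_getD hn 0 0) _).set (h.rel_getD hm 0 0) _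

theorem List.Forall₂.insert2 {R : ℕ → ℕ → Prop} {l₁ l₂ : List ℕ} (h : Forall₂ R l₁ l₂)
    {a b : ℕ} (hab : R a b) (m n : ℕ) : Forall₂ R (insert2 l₁ m n a) (insert2 l₂ m n b) :=
  (h.insertIdx hab _).insertIdx hab _

theorem idxLe_nil : IdxLe [] [] := idxLe_iff_forall₂.2 .nil

theorem IdxLe.take_append {i : Index} {t₀ t₁ : Ty} (h : IdxLe i (t₀ ++ t₁)) :
    IdxLe (i.take t₀.length) t₀ :=
  idxLe_iff_forall₂.2 (forall₂_take_append _ _ _ (idxLe_iff_forall₂.1 h))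

theorem IdxLe.drop_append {i : Index} {t₀ t₁ : Ty} (h : IdxLe i (t₀ ++ t₁)) :
    IdxLe (i.drop t₀.length) t₁ :=
  idxLe_iff_forall₂.2 (forall₂_drop_append _ _ _ (idxLe_iff_forall₂.1 h))

theorem IdxLe.swapIdx {i t : Index} {m n : ℕ} (h : IdxLe i (swapIdx t m n)) (hm : 1 ≤ m)
    (hmn : m < n) (hn : n ≤ t.length) : IdxLe (swapIdx i m n) t := by
  have hlen : (_root_.swapIdx t m n).length = t.length := by simp [_root_.swapIdx]
  rw [idxLe_iff_forall₂] at h ⊢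
  rw [← swapIdx_swapIdx (t := t) (by omega : m - 1 ≠ n - 1) (by omega) (by omega)]
  exact h.swapIdx (by omega) (by omega)

theorem IdxLe.insert2 {i t : Index} {m n l : ℕ} (h : IdxLe i (delete2 t m n)) (hm : 1 ≤ m)
    (hmn : m < n) (hn : n ≤ t.length) (heq : t.getD (m-1) 0 = t.getD (n-1) 0) (hl : 1 ≤ l)
    (hlt : l ≤ t.getD (m-1) 0) : IdxLe (insert2 i m n l) t := by
  rw [idxLe_iff_forall₂] at h ⊢
  rw [← insert2_delete2 (t := t) (by omega : m - 1 < n - 1) (by omega) heq]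
  exact h.insert2 ⟨hl, hlt⟩ m n

theorem HasTy.inferTy_eq {Γ : Ctx} {e : Expr} {t : Ty} (h : HasTy Γ e t) :
    inferTy Γ e = some t := by
  induction h with
  | var h => simpa [inferTy]
  | paren _ ih => simpa [inferTy]
  | prod _ _ ih₀ ih₁ => simp [inferTy, ih₀, ih₁]
  | trans _ h1 h2 h3 ih => simp [inferTy, ih, h1, h2, h3]
  | contr _ h1 h2 h3 h4 ih =>
    simp only [List.getD_eq_getElem?_getD] at h4
    simp [inferTy, ih, h1, h2, h3, h4]
  | elem _ _ ih₀ ih₁ => simp [inferTy, ih₀, ih₁]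
  | @smul e₀ e₁ t _ _ ih₀ ih₁ => by_cases ht : t = [] <;> simp [inferTy, ih₀, ih₁, ht]
  | @sdiv e₀ e₁ t _ _ ih₀ ih₁ => by_cases ht : t = [] <;> simp [inferTy, ih₀, ih₁, ht]

section Eval

variable {V : Type} [Field V] [DecidableEq V] {Γ : Ctx} {μ : Store V}

theorem isSome_eval_prod {e₀ e₁ : Expr} {t₀ t₁ : Ty} (ht₀ : inferTy Γ e₀ = some t₀)
    (h₀ : ∀ i, IdxLe i t₀ → (eval Γ μ e₀ i).isSome)
    (h₁ : ∀ i, IdxLe i t₁ → (eval Γ μ e₁ i).isSome) (i : Index) (hi : IdxLe i (t₀ ++ t₁)) :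
    (eval Γ μ (.prod e₀ e₁) i).isSome := by
  simp only [eval, ht₀, Option.bind_eq_bind, Option.bind_some]
  exact Option.isSome_bind_bind_pure (h₀ _ hi.take_append) (h₁ _ hi.drop_append)

theorem isSome_eval_contr {e : Expr} {t : Ty} {m n : ℕ} {i : Index} (ht : inferTy Γ e = some t)
    (h : ∀ l, 1 ≤ l → l ≤ t.getD (m-1) 0 → (eval Γ μ e (insert2 i m n l)).isSome) :
    (eval Γ μ (.contr e m n) i).isSome := by
  obtain ⟨vs, hvs⟩ := Option.isSome_iff_exists.mp <| isSome_mapM_of_forall fun l hl =>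
    h (l + 1) l.succ_pos (List.mem_range.mp hl)
  simp only [eval, ht, Option.bind_eq_bind, Option.bind_some, hvs, Option.pure_def,
    Option.isSome_some]

/-- The scalar operand of `*` (on the left) or `/` (on the right) is evaluated at `[]`, so `i`
need only fit the other operand. -/
theorem isSome_eval_binop {op : Op} {e₀ e₁ : Expr} {t₀ t₁ : Ty} {i : Index}
    (ht₀ : inferTy Γ e₀ = some t₀) (ht₁ : inferTy Γ e₁ = some t₁)
    (h₀ : ∀ j, IdxLe j t₀ → (eval Γ μ e₀ j).isSome)
    (h₁ : ∀ j, IdxLe j t₁ → (eval Γ μ e₁ j).isSome)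
    (hi₀ : op = .mul ∧ t₀ = [] ∨ IdxLe i t₀) (hi₁ : op = .div ∧ t₁ = [] ∨ IdxLe i t₁) :
    (eval Γ μ (.binop op e₀ e₁) i).isSome := by
  simp only [eval, ht₀, ht₁, Option.bind_eq_bind, Option.bind_some]
  split_ifs with hmul hdiv
  · refine Option.isSome_bind_bind_pure (h₀ [] (hmul.2 ▸ idxLe_nil)) (h₁ i (hi₁.resolve_left ?_))
    exact fun hdiv => nomatch hmul.1.symm.trans hdiv.1
  · exact Option.isSome_bind_bind_pure (h₀ i (hi₀.resolve_left hmul)) (h₁ [] (hdiv.2 ▸ idxLe_nil))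
  · exact Option.isSome_bind_bind_pure (h₀ i (hi₀.resolve_left hmul)) (h₁ i (hi₁.resolve_left hdiv))

end Eval

/-- **Well-defined evaluation**: if the store `μ'` contains the domain of the unique
initial store `μ(Γ)` and `Γ ⊢ e : t`, then `eval_{Γ,μ'}(e_i)` is well-defined
(yields a value in `𝕍 ∪ {•}`) for every multi-index `i ≤ t`. -/
theorem eval_wellDefined (V : Type) [Field V] [DecidableEq V] (Γ : Ctx)
    (μ' : Store V)
    (hdom : ∀ x t, Γ x = some t → ∀ i, IdxLe i t → μ' (x, i) ≠ none)
    {e : Expr} {t : Ty} (h : HasTy Γ e t) :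
    ∀ i, IdxLe i t → (eval Γ μ' e i).isSome := by
  induction h with
  | var hx => exact fun i hi => Option.isSome_iff_ne_none.2 (hdom _ _ hx i hi)
  | paren _ ih => exact ih
  | prod h₀ _ ih₀ ih₁ => exact isSome_eval_prod h₀.inferTy_eq ih₀ ih₁
  | trans _ hm hmn hn ih => exact fun i hi => ih _ (hi.swapIdx hm hmn hn)
  | contr h₀ hm hmn hn heq ih =>
    exact fun i hi => isSome_eval_contr h₀.inferTy_eq fun l hl hlt =>
      ih _ (hi.insert2 hm hmn hn heq hl hlt)
  | elem h₀ h₁ ih₀ ih₁ =>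
    exact fun i hi => isSome_eval_binop h₀.inferTy_eq h₁.inferTy_eq ih₀ ih₁ (.inr hi) (.inr hi)
  | smul h₀ h₁ ih₀ ih₁ =>
    exact fun i hi =>
      isSome_eval_binop h₀.inferTy_eq h₁.inferTy_eq ih₀ ih₁ (.inl ⟨rfl, rfl⟩) (.inr hi)
  | sdiv h₀ h₁ ih₀ ih₁ =>
    exact fun i hi =>
      isSome_eval_binop h₀.inferTy_eq h₁.inferTy_eq ih₀ ih₁ (.inr hi) (.inl ⟨rfl, rfl⟩)
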